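/- arXiv:0908.3995 — 5 statements merged into one kernel-verified Lean document; each statement's English description precedes it below -/
import Mathlib

section
/- Let τ be a ℂ-linear involution of E with τ∘γ(v) = −γ(v)∘τ for all v ∈ V. Suppose Φ = Σᵢ₌₁^m γ(vᵢ)∘σᵢ + τ∘χ, where v₁, …, v_m ∈ V and σ₁, …, σ_m, χ are γ-invariant endomorphisms of E. Then for every v ∈ V the anticommutator satisfies {Φ, γ(v)} = 2ε Σᵢ g(vᵢ, v) σᵢ; in particular {Φ, γ(v)} is γ-invariant for every v ∈ V. (This is the sufficiency part of the classification, in Proposition 4.1, of real Dirac operators of simple type in the case γ^cc = +γ.) -/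
/-- if `τ` is an involution anticommuting with the Clifford action and
`Φ = Σᵢ γ(vᵢ)∘σᵢ + τ∘χ` with `σᵢ, χ` γ-invariant, then for every `v` the
anticommutator `{Φ, γ(v)}` equals `2ε Σᵢ g(vᵢ,v) σᵢ`, hence is γ-invariant. -/
theorem stmt_4 (V : Type*) [AddCommGroup V] [Module ℝ V]
    (E : Type*) [AddCommGroup E] [Module ℂ E]
    (g : V → V → ℝ) (hg : ∀ v w : V, g v w = g w v)
    (ε : ℝ) (hε : ε = 1 ∨ ε = -1)
    (γ : V → Module.End ℂ E)
    (hcl : ∀ v w : V, γ v * γ w + γ w * γ v = ((2 * ε * g v w : ℝ) : ℂ) • 1)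
    (τ : Module.End ℂ E) (hτ : τ * τ = 1)
    (hτγ : ∀ v : V, τ * γ v = -(γ v * τ))
    (m : ℕ) (vs : Fin m → V) (σ : Fin m → Module.End ℂ E) (χ : Module.End ℂ E)
    (hσ : ∀ (i : Fin m) (v : V), σ i * γ v = γ v * σ i)
    (hχ : ∀ v : V, χ * γ v = γ v * χ)
    (Φ : Module.End ℂ E)
    (hΦ : Φ = (∑ i : Fin m, γ (vs i) * σ i) + τ * χ) :
    ∀ v : V,
      (Φ * γ v + γ v * Φ = ∑ i : Fin m, ((2 * ε * g (vs i) v : ℝ) : ℂ) • σ i) ∧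
      (∀ w : V, (Φ * γ v + γ v * Φ) * γ w = γ w * (Φ * γ v + γ v * Φ)) := by
  intro v
  have key : Φ * γ v + γ v * Φ = ∑ i : Fin m, ((2 * ε * g (vs i) v : ℝ) : ℂ) • σ i := by
    subst hΦ
    have hτ' : (τ * χ) * γ v + γ v * (τ * χ) = 0 := by
      have h1 : (τ * χ) * γ v = τ * γ v * χ := by rw [mul_assoc, hχ, mul_assoc]
      rw [h1, hτγ v]
      noncomm_ring
    have hsum : ∀ i : Fin m,
        (γ (vs i) * σ i) * γ v + γ v * (γ (vs i) * σ i)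
          = ((2 * ε * g (vs i) v : ℝ) : ℂ) • σ i := by
      intro i
      have h1 : (γ (vs i) * σ i) * γ v = γ (vs i) * γ v * σ i := by
        rw [mul_assoc, hσ, mul_assoc]
      rw [h1, ← mul_assoc, ← add_mul, hcl (vs i) v, smul_mul_assoc, one_mul]
    calc ((∑ i : Fin m, γ (vs i) * σ i) + τ * χ) * γ v
          + γ v * ((∑ i : Fin m, γ (vs i) * σ i) + τ * χ)
        = (∑ i : Fin m, ((γ (vs i) * σ i) * γ v + γ v * (γ (vs i) * σ i)))
            + ((τ * χ) * γ v + γ v * (τ * χ)) := by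
          rw [add_mul, mul_add, Finset.sum_mul, Finset.mul_sum, Finset.sum_add_distrib]; abel
      _ = ∑ i : Fin m, ((2 * ε * g (vs i) v : ℝ) : ℂ) • σ i := by
          rw [hτ', add_zero]
          exact Finset.sum_congr rfl fun i _ => hsum i
  refine ⟨key, fun w => ?_⟩
  rw [key, Finset.sum_mul, Finset.mul_sum]
  exact Finset.sum_congr rfl fun i _ => by rw [smul_mul_assoc, mul_smul_comm, hσ]
end

section
/- Let τ be a ℂ-linear involution of E with τ∘γ(v) = −γ(v)∘τ for all v ∈ V. Suppose Φ = χ + τ∘(Σᵢ₌₁^m γ(vᵢ)∘σᵢ), where v₁, …, v_m ∈ V and σ₁, …, σ_m, χ are γ-invariant endomorphisms of E. Then for every v ∈ V the commutator satisfies [Φ, γ(v)] = 2ε Σᵢ g(vᵢ, v) τ∘σᵢ, and this endomorphism anticommutes with γ(w) for every w ∈ V. (This is the sufficiency part of the classification, in Proposition 4.1, of real Dirac operators of simple type in the case γ^cc = −γ.) -/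
/-- if `τ` is an involution anticommuting with the Clifford action and
`Φ = χ + τ∘(Σᵢ γ(vᵢ)∘σᵢ)` with `σᵢ, χ` γ-invariant, then for every `v` the
commutator `[Φ, γ(v)]` equals `2ε Σᵢ g(vᵢ,v) τ∘σᵢ`, and it anticommutes with
`γ(w)` for every `w`. -/
theorem stmt_5 (V : Type*) [AddCommGroup V] [Module ℝ V]
    (E : Type*) [AddCommGroup E] [Module ℂ E]
    (g : V → V → ℝ) (hg : ∀ v w : V, g v w = g w v)
    (ε : ℝ) (hε : ε = 1 ∨ ε = -1)
    (γ : V → Module.End ℂ E)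
    (hcl : ∀ v w : V, γ v * γ w + γ w * γ v = ((2 * ε * g v w : ℝ) : ℂ) • 1)
    (τ : Module.End ℂ E) (hτ : τ * τ = 1)
    (hτγ : ∀ v : V, τ * γ v = -(γ v * τ))
    (m : ℕ) (vs : Fin m → V) (σ : Fin m → Module.End ℂ E) (χ : Module.End ℂ E)
    (hσ : ∀ (i : Fin m) (v : V), σ i * γ v = γ v * σ i)
    (hχ : ∀ v : V, χ * γ v = γ v * χ)
    (Φ : Module.End ℂ E)
    (hΦ : Φ = χ + τ * ∑ i : Fin m, γ (vs i) * σ i) :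
    ∀ v : V,
      (Φ * γ v - γ v * Φ = ∑ i : Fin m, ((2 * ε * g (vs i) v : ℝ) : ℂ) • (τ * σ i)) ∧
      (∀ w : V, (Φ * γ v - γ v * Φ) * γ w + γ w * (Φ * γ v - γ v * Φ) = 0) := by
  intro v
  have key : Φ * γ v - γ v * Φ
      = ∑ i : Fin m, ((2 * ε * g (vs i) v : ℝ) : ℂ) • (τ * σ i) := by
    subst hΦ
    have hγτ : ∀ u : V, γ u * τ = -(τ * γ u) := by
      intro u; rw [hτγ u, neg_neg]
    calc (χ + τ * ∑ i : Fin m, γ (vs i) * σ i) * γ v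
          - γ v * (χ + τ * ∑ i : Fin m, γ (vs i) * σ i)
        = τ * ((∑ i : Fin m, γ (vs i) * σ i) * γ v
            + γ v * ∑ i : Fin m, γ (vs i) * σ i) := by
          rw [add_mul, mul_add, hχ v, ← mul_assoc (γ v) τ, hγτ v]
          noncomm_ring
      _ = τ * ∑ i : Fin m, ((2 * ε * g (vs i) v : ℝ) : ℂ) • σ i := by
          congr 1
          rw [Finset.sum_mul, Finset.mul_sum, ← Finset.sum_add_distrib]
          refine Finset.sum_congr rfl fun i _ => ?_
          calc γ (vs i) * σ i * γ v + γ v * (γ (vs i) * σ i)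
              = (γ (vs i) * γ v + γ v * γ (vs i)) * σ i := by
                rw [mul_assoc, hσ i v]; noncomm_ring
            _ = ((2 * ε * g (vs i) v : ℝ) : ℂ) • σ i := by
                rw [hcl, smul_mul_assoc, one_mul]
      _ = ∑ i : Fin m, ((2 * ε * g (vs i) v : ℝ) : ℂ) • (τ * σ i) := by
          rw [Finset.mul_sum]
          exact Finset.sum_congr rfl fun i _ => (mul_smul_comm _ _ _)
  refine ⟨key, fun w => ?_⟩
  rw [key, Finset.sum_mul, Finset.mul_sum, ← Finset.sum_add_distrib]
  refine Finset.sum_eq_zero fun i _ => ?_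
  rw [smul_mul_assoc, mul_smul_comm, ← smul_add]
  have : τ * σ i * γ w + γ w * (τ * σ i) = 0 := by
    rw [mul_assoc, hσ i w, ← mul_assoc, hτγ w]; noncomm_ring
  rw [this, smul_zero]
end

section
/- Let S be a complex vector space, γ : V → End_ℂ(S) an ℝ-linear Clifford map, and J a real structure on S with J∘γ(v)∘J = γ(v) for all v ∈ V. For Φ ∈ End_ℂ(S) define on ²S := S ⊕ S the maps Γ(v)(u₁,u₂) := (γ(v)u₁, γ(v)u₂) and Φ′(u₁,u₂) := (Φ^cc u₂, Φ u₁). Then the anticommutator {Γ(v), Φ′} commutes with Γ(w) for all v, w ∈ V if and only if the anticommutator {Φ, γ(v)} commutes with γ(w) for all v, w ∈ V. (This is the pivotal equivalence in the proof of Proposition 4.1, case γ^cc = +γ: the condition that the Bochner connection of a real Dirac operator on the doubled module is a Clifford connection reduces to a graded commutator condition on Φ.) -/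
/-- on the doubled module `²S` with `Γ(v)(u₁,u₂) = (γ(v)u₁, γ(v)u₂)`
and `Φ′(u₁,u₂) = (Φ^cc u₂, Φ u₁)` (where `Φ^cc = J∘Φ∘J` and `J∘γ(v)∘J = γ(v)`),
the anticommutator `{Γ(v), Φ′}` commutes with `Γ(w)` for all `v, w` iff the
anticommutator `{Φ, γ(v)}` commutes with `γ(w)` for all `v, w`. -/
theorem stmt_6 (V : Type*) [AddCommGroup V] [Module ℝ V]
    (S : Type*) [AddCommGroup S] [Module ℂ S]
    (g : V → V → ℝ) (hg : ∀ v w : V, g v w = g w v)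
    (ε : ℝ) (hε : ε = 1 ∨ ε = -1)
    (γ : V → Module.End ℂ S)
    (hcl : ∀ v w : V, γ v * γ w + γ w * γ v = ((2 * ε * g v w : ℝ) : ℂ) • 1)
    (J : S → S)
    (hJadd : ∀ x y : S, J (x + y) = J x + J y)
    (hJsmul : ∀ (c : ℂ) (x : S), J (c • x) = (starRingEnd ℂ) c • J x)
    (hJJ : ∀ x : S, J (J x) = x)
    (hJγ : ∀ (v : V) (x : S), J (γ v (J x)) = γ v x)
    (Φ : Module.End ℂ S)
    (Γ : V → S × S → S × S)
    (hΓ : ∀ (v : V) (p : S × S), Γ v p = (γ v p.1, γ v p.2))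
    (Φ' : S × S → S × S)
    (hΦ' : ∀ p : S × S, Φ' p = (J (Φ (J p.2)), Φ p.1)) :
    (∀ (v w : V) (p : S × S),
        Γ w (Γ v (Φ' p) + Φ' (Γ v p)) = Γ v (Φ' (Γ w p)) + Φ' (Γ v (Γ w p)))
      ↔
    (∀ v w : V, γ w * (γ v * Φ + Φ * γ v) = (γ v * Φ + Φ * γ v) * γ w) := by
  have hJγ' : ∀ (v : V) (x : S), γ v (J x) = J (γ v x) := by
    intro v x
    calc γ v (J x) = J (J (γ v (J x))) := (hJJ _).symm
      _ = J (γ v x) := by rw [hJγ]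
  constructor
  · intro h v w
    ext x
    have h2 := congrArg Prod.snd (h v w (x, 0))
    simp only [hΓ, hΦ', Prod.fst_add, Prod.snd_add, Prod.snd] at h2
    simpa [Module.End.mul_apply, map_add] using h2
  · intro h v w p
    have key : ∀ x : S, γ w (γ v (Φ x)) + γ w (Φ (γ v x))
        = γ v (Φ (γ w x)) + Φ (γ v (γ w x)) := by
      intro x
      have := LinearMap.congr_fun (h v w) x
      simpa [Module.End.mul_apply, LinearMap.add_apply, map_add] using this
    simp only [hΓ, hΦ', Prod.fst_add, Prod.snd_add, Prod.mk_add_mk, Prod.mk.injEq]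
    constructor
    · rw [hJγ' v (Φ (J p.2)), ← hJγ' v p.2, ← hJadd,
        hJγ' w (γ v (Φ (J p.2)) + Φ (γ v (J p.2))),
        hJγ' v (Φ (J (γ w p.2))), ← hJγ' v (γ w p.2), ← hJγ' w p.2, ← hJadd,
        map_add]
      exact congrArg J (key (J p.2))
    · rw [map_add]
      exact key p.1
end

section
/- Let S be a complex vector space, γ : V → End_ℂ(S) an ℝ-linear Clifford map, and J a real structure on S with J∘γ(v)∘J = −γ(v) for all v ∈ V. For Φ ∈ End_ℂ(S) define on ²S := S ⊕ S the maps Γ(v)(u₁,u₂) := (γ(v)u₁, −γ(v)u₂) and Φ′(u₁,u₂) := (Φ^cc u₂, Φ u₁). Then the anticommutator {Γ(v), Φ′} commutes with Γ(w) for all v, w ∈ V if and only if the commutator [Φ, γ(v)] anticommutes with γ(w) for all v, w ∈ V. (This is the pivotal equivalence in the proof of Proposition 4.1, case γ^cc = −γ.) -/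
/-- on the doubled module `²S` with `Γ(v)(u₁,u₂) = (γ(v)u₁, −γ(v)u₂)`
and `Φ′(u₁,u₂) = (Φ^cc u₂, Φ u₁)` (where `Φ^cc = J∘Φ∘J` and `J∘γ(v)∘J = −γ(v)`),
the anticommutator `{Γ(v), Φ′}` commutes with `Γ(w)` for all `v, w` iff the
commutator `[Φ, γ(v)]` anticommutes with `γ(w)` for all `v, w`. -/
theorem stmt_7 (V : Type*) [AddCommGroup V] [Module ℝ V]
    (S : Type*) [AddCommGroup S] [Module ℂ S]
    (g : V → V → ℝ) (hg : ∀ v w : V, g v w = g w v)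
    (ε : ℝ) (hε : ε = 1 ∨ ε = -1)
    (γ : V → Module.End ℂ S)
    (hcl : ∀ v w : V, γ v * γ w + γ w * γ v = ((2 * ε * g v w : ℝ) : ℂ) • 1)
    (J : S → S)
    (hJadd : ∀ x y : S, J (x + y) = J x + J y)
    (hJsmul : ∀ (c : ℂ) (x : S), J (c • x) = (starRingEnd ℂ) c • J x)
    (hJJ : ∀ x : S, J (J x) = x)
    (hJγ : ∀ (v : V) (x : S), J (γ v (J x)) = -γ v x)
    (Φ : Module.End ℂ S)
    (Γ : V → S × S → S × S)
    (hΓ : ∀ (v : V) (p : S × S), Γ v p = (γ v p.1, -γ v p.2))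
    (Φ' : S × S → S × S)
    (hΦ' : ∀ p : S × S, Φ' p = (J (Φ (J p.2)), Φ p.1)) :
    (∀ (v w : V) (p : S × S),
        Γ w (Γ v (Φ' p) + Φ' (Γ v p)) = Γ v (Φ' (Γ w p)) + Φ' (Γ v (Γ w p)))
      ↔
    (∀ v w : V, γ w * (Φ * γ v - γ v * Φ) + (Φ * γ v - γ v * Φ) * γ w = 0) := by
  have hJ0 : J 0 = 0 := by
    have h := hJsmul 0 0
    simpa using h
  have hJneg : ∀ x : S, J (-x) = -J x := by
    intro x
    have h := hJadd x (-x)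
    simp only [add_neg_cancel, hJ0] at h
    exact (eq_neg_of_add_eq_zero_right h.symm)
  have hJγ' : ∀ (v : V) (x : S), J (γ v x) = -γ v (J x) := by
    intro v x
    have h := hJγ v (J x)
    rwa [hJJ] at h
  have hγJ : ∀ (v : V) (x : S), γ v (J x) = -J (γ v x) := by
    intro v x
    rw [hJγ', neg_neg]
  constructor
  · intro h v w
    ext x
    have h' := h v w (x, 0)
    simp only [hΓ, hΦ', hJ0, map_zero, neg_zero, Prod.fst_add, Prod.snd_add,
      Prod.mk_add_mk, zero_add, add_zero, Prod.mk.injEq] at h'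
    have h2 := h'.2
    simp only [map_neg, map_add, map_sub, neg_neg] at h2
    simp only [LinearMap.add_apply, Module.End.mul_apply, LinearMap.sub_apply,
      LinearMap.zero_apply, map_neg, map_add, map_sub]
    rw [← sub_eq_zero, ← neg_eq_zero] at h2
    rw [← h2]
    abel
  · intro h v w p
    have key : ∀ x : S, γ w (Φ (γ v x)) - γ w (γ v (Φ x)) +
        (Φ (γ v (γ w x)) - γ v (Φ (γ w x))) = 0 := by
      intro x
      have h' := congrArg (fun f => f x) (h v w)
      simpa [LinearMap.add_apply, Module.End.mul_apply, LinearMap.sub_apply] using h'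
    have comb : ∀ a b : S, -J a + J b = J (b - a) := by
      intro a b
      rw [sub_eq_add_neg, hJadd, hJneg]
      abel
    simp only [hΓ, hΦ', Prod.fst_add, Prod.snd_add, Prod.mk_add_mk, map_neg, neg_neg,
      Prod.mk.injEq]
    constructor
    · -- first components
      have a1 : J (-γ v p.2) = γ v (J p.2) := by rw [hJneg, hJγ', neg_neg]
      have a2 : J (-γ w p.2) = γ w (J p.2) := by rw [hJneg, hJγ', neg_neg]
      have a3 : J (γ v (γ w p.2)) = γ v (γ w (J p.2)) := by
        rw [hJγ', hJγ', map_neg, neg_neg]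
      rw [a1, a2, a3]
      set q := J p.2 with hq
      have hXY : γ w (Φ (γ v q) - γ v (Φ q)) = -(Φ (γ v (γ w q)) - γ v (Φ (γ w q))) := by
        have k := key q
        rw [map_sub, neg_sub, ← sub_eq_zero, ← k]
        abel
      calc γ w (γ v (J (Φ q)) + J (Φ (γ v q)))
          = γ w (-J (γ v (Φ q)) + J (Φ (γ v q))) := by rw [hγJ]
        _ = γ w (J (Φ (γ v q) - γ v (Φ q))) := by rw [comb]
        _ = -J (γ w (Φ (γ v q) - γ v (Φ q))) := hγJ w _
        _ = -J (-(Φ (γ v (γ w q)) - γ v (Φ (γ w q)))) := by rw [hXY]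
        _ = J (Φ (γ v (γ w q)) - γ v (Φ (γ w q))) := by rw [hJneg, neg_neg]
        _ = -J (γ v (Φ (γ w q))) + J (Φ (γ v (γ w q))) := (comb _ _).symm
        _ = γ v (J (Φ (γ w q))) + J (Φ (γ v (γ w q))) := by rw [← hγJ]
    · -- second components
      have k := neg_eq_zero.mpr (key p.1)
      simp only [map_add, map_neg]
      rw [← sub_eq_zero, ← k]
      abel
end

section
/- Let e₁, …, eₙ be an orthonormal basis of V and let 𝔽 = Σᵢ γ(aᵢ)∘γ(bᵢ)∘Kᵢ be a finite sum where aᵢ, bᵢ ∈ V satisfy g(aᵢ, bᵢ) = 0 and each Kᵢ is a γ-invariant endomorphism of E. Then (ε/4) Σₖ₌₁ⁿ ηₖ tr({γ(eₖ), 𝔽}∘{γ(eₖ), 𝔽}) = (n − 2) tr(𝔽∘𝔽), where {·,·} denotes the anticommutator. (This is the Clifford trace identity (ε/4) g(eᵢ,eⱼ) tr({γ(eⁱ), /F}{γ(eʲ), /F}) = ((2−n)/2) tr_g(F²) for the quantized twisting curvature /F, used to produce the Yang–Mills Lagrangian with its dimension-dependent coefficient n − 3 in the Dirac action.) -/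
/-!
Write `C X = Σₖ ηₖ γ(eₖ) X γ(eₖ)` for the Clifford contraction. Expanding `γ(a)` in the
orthonormal basis turns the Clifford relation into `C(γ(a) X) = 2ε X γ(a) - γ(a) C(X)`, and
`C(1) = nε`. Hence `C(γ(v)) = (2 - n)ε γ(v)` and, for `g(a, b) = 0`, where `γ(b)γ(a) = -γ(a)γ(b)`,
`C(γ(a)γ(b)) = (n - 4)ε γ(a)γ(b)`; the γ-invariant factors `Kᵢ` pass through `C`, so
`C(𝔽) = (n - 4)ε 𝔽`. By cyclicity of the trace,
`Σₖ ηₖ tr({γ(eₖ), 𝔽}²) = 2 tr(C(𝔽) 𝔽) + 2 tr(C(1) 𝔽²) = 2ε(2n - 4) tr(𝔽²)`, and `ε² = 1`.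
-/

open Finset

theorem LinearMap.BilinForm.apply_basis_eq_mul_repr {V ι : Type*} [AddCommGroup V] [Module ℝ V]
    [Fintype ι] {B : LinearMap.BilinForm ℝ V} {e : Module.Basis ι ℝ V} {η : ι → ℝ}
    (horth : ∀ i j, i ≠ j → B (e i) (e j) = 0) (hdiag : ∀ i, B (e i) (e i) = η i)
    (v : V) (k : ι) : B (e k) v = η k * e.repr v k := by
  calc B (e k) v = B (e k) (∑ i, e.repr v i • e i) := by rw [e.sum_repr]
    _ = ∑ i, e.repr v i * B (e k) (e i) := by simp only [map_sum, map_smul, smul_eq_mul]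
    _ = η k * e.repr v k := by
      rw [sum_eq_single k (fun i _ hik => by rw [horth k i hik.symm, mul_zero])
        (fun h => absurd (mem_univ k) h), hdiag, mul_comm]

theorem LinearMap.BilinForm.sum_mul_apply_basis_smul {V ι : Type*} [AddCommGroup V]
    [Module ℝ V] [Fintype ι] {B : LinearMap.BilinForm ℝ V} {e : Module.Basis ι ℝ V}
    {η : ι → ℝ} (horth : ∀ i j, i ≠ j → B (e i) (e j) = 0) (hdiag : ∀ i, B (e i) (e i) = η i)
    (hη : ∀ i, η i ^ 2 = 1) (v : V) : ∑ k, (η k * B (e k) v) • e k = v := by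
  conv_rhs => rw [← e.sum_repr v]
  refine sum_congr rfl fun k _ => ?_
  rw [apply_basis_eq_mul_repr horth hdiag, ← mul_assoc, ← sq, hη, one_mul]

theorem LinearMap.trace_anticomm_mul_self {R M : Type*} [CommRing R] [AddCommGroup M]
    [Module R M] [Module.Free R M] [Module.Finite R M] (x F : Module.End R M) :
    trace R M ((x * F + F * x) * (x * F + F * x)) =
      2 * trace R M (x * F * x * F) + 2 * trace R M (x * x * (F * F)) := by
  have h₁ : trace R M (x * F * (F * x)) = trace R M (x * x * (F * F)) := by
    rw [← mul_assoc, trace_mul_cycle]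
    simp only [mul_assoc]
  have h₂ : trace R M (F * x * (x * F)) = trace R M (x * x * (F * F)) := by
    rw [trace_mul_comm, ← mul_assoc, trace_mul_cycle]
    simp only [mul_assoc]
  have h₃ : trace R M (F * x * (F * x)) = trace R M (x * F * x * F) := by
    rw [← mul_assoc, trace_mul_comm, ← mul_assoc, ← mul_assoc]
  simp only [add_mul, mul_add, map_add, ← mul_assoc] at h₁ h₂ h₃ ⊢
  rw [h₁, h₂, h₃]
  ring

theorem LinearMap.sum_mul_trace_anticomm_mul_self {R M ι : Type*} [CommRing R] [AddCommGroup M]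
    [Module R M] [Module.Free R M] [Module.Finite R M] [Fintype ι] (c : ι → R)
    (x : ι → Module.End R M) (F : Module.End R M) :
    ∑ k, c k * trace R M ((x k * F + F * x k) * (x k * F + F * x k)) =
      2 * trace R M ((∑ k, c k • (x k * F * x k)) * F) +
        2 * trace R M ((∑ k, c k • (x k * x k)) * (F * F)) := by
  simp only [trace_anticomm_mul_self, sum_mul, map_sum, smul_mul_assoc, map_smul, smul_eq_mul,
    mul_sum, ← sum_add_distrib]
  exact sum_congr rfl fun k _ => by ring

section Contraction

variable {V A ι : Type*} [AddCommGroup V] [Module ℝ V] [Ring A] [Algebra ℝ A] [Fintype ι]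
  (γ : V →ₗ[ℝ] A) (e : ι → V) (η : ι → ℝ)

def cliffordContraction : A →ₗ[ℝ] A :=
  ∑ k, η k • LinearMap.mulLeftRight ℝ (γ (e k), γ (e k))

@[simp]
theorem cliffordContraction_apply (x : A) :
    cliffordContraction γ e η x = ∑ k, η k • (γ (e k) * x * γ (e k)) := by
  simp [cliffordContraction]

theorem cliffordContraction_mul_of_commute {K : A} (hK : ∀ v, Commute K (γ v)) (x : A) :
    cliffordContraction γ e η (x * K) = cliffordContraction γ e η x * K := by
  simp only [cliffordContraction_apply, sum_mul, smul_mul_assoc, mul_assoc, (hK _).eq]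

variable {γ e η} {B : LinearMap.BilinForm ℝ V} {ε : ℝ}
  (hcl : ∀ v w, γ v * γ w + γ w * γ v = (2 * ε * B v w) • (1 : A))
  (hdiag : ∀ k, B (e k) (e k) = η k) (hη : ∀ k, η k ^ 2 = 1)
  (hexp : ∀ v, ∑ k, (η k * B (e k) v) • e k = v)

include hcl in
theorem clifford_mul_self (v : V) : γ v * γ v = (ε * B v v) • (1 : A) := by
  apply smul_right_injective A (two_ne_zero : (2 : ℝ) ≠ 0)
  dsimp only
  rw [two_smul, hcl, smul_smul, mul_assoc]

include hcl hdiag hη in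
theorem cliffordContraction_one :
    cliffordContraction γ e η 1 = (ε * Fintype.card ι) • (1 : A) := by
  simp only [cliffordContraction_apply, mul_one, clifford_mul_self hcl, hdiag, smul_smul]
  rw [sum_congr rfl fun k _ => by rw [← mul_assoc, mul_comm (η k), mul_assoc, ← sq, hη, mul_one],
    sum_const, card_univ, ← Nat.cast_smul_eq_nsmul ℝ, smul_smul, mul_comm]

include hcl hexp in
theorem cliffordContraction_gamma_mul (a : V) (x : A) :
    cliffordContraction γ e η (γ a * x) =
      (2 * ε) • (x * γ a) - γ a * cliffordContraction γ e η x := by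
  have hterm : ∀ k, γ (e k) * (γ a * x) * γ (e k) =
      (2 * ε * B (e k) a) • (x * γ (e k)) - γ a * (γ (e k) * x * γ (e k)) := by
    intro k
    rw [← mul_assoc, eq_sub_of_add_eq (hcl (e k) a)]
    simp only [sub_mul, smul_mul_assoc, one_mul, mul_assoc]
  have hγa : ∑ k, (η k * B (e k) a) • γ (e k) = γ a := by
    simpa only [map_sum, map_smul] using congrArg γ (hexp a)
  simp only [cliffordContraction_apply, hterm, smul_sub, sum_sub_distrib, mul_sum, mul_smul_comm]
  congr 1
  rw [← hγa, mul_sum, smul_sum]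
  refine sum_congr rfl fun k _ => ?_
  rw [mul_smul_comm, smul_smul, smul_smul]
  ring_nf

include hcl hdiag hη hexp in
theorem cliffordContraction_gamma (v : V) :
    cliffordContraction γ e η (γ v) = (ε * (2 - Fintype.card ι)) • γ v := by
  have h := cliffordContraction_gamma_mul hcl hexp v 1
  rw [mul_one, one_mul, cliffordContraction_one hcl hdiag hη, mul_smul_comm, mul_one] at h
  rw [h, ← sub_smul]
  ring_nf

include hcl hdiag hη hexp in
theorem cliffordContraction_gamma_mul_gamma {a b : V} (hab : B a b = 0) :
    cliffordContraction γ e η (γ a * γ b) = (ε * (Fintype.card ι - 4)) • (γ a * γ b) := by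
  have hba : γ b * γ a = -(γ a * γ b) := by
    refine eq_neg_of_add_eq_zero_right ?_
    rw [hcl, hab, mul_zero, zero_smul]
  rw [cliffordContraction_gamma_mul hcl hexp, cliffordContraction_gamma hcl hdiag hη hexp,
    mul_smul_comm, hba, smul_neg, ← neg_smul, ← sub_smul]
  ring_nf

include hcl hdiag hη hexp in
theorem cliffordContraction_sum_gamma_mul_gamma_mul {κ : Type*} [Fintype κ] (a b : κ → V)
    (K : κ → A) (hab : ∀ i, B (a i) (b i) = 0) (hK : ∀ i v, Commute (K i) (γ v)) :
    cliffordContraction γ e η (∑ i, γ (a i) * γ (b i) * K i) =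
      (ε * (Fintype.card ι - 4)) • ∑ i, γ (a i) * γ (b i) * K i := by
  simp only [map_sum, cliffordContraction_mul_of_commute γ e η (hK _),
    cliffordContraction_gamma_mul_gamma hcl hdiag hη hexp (hab _), smul_mul_assoc, smul_sum]

end Contraction

/-- Clifford trace identity for a quantized two-form
`𝔽 = Σᵢ γ(aᵢ)∘γ(bᵢ)∘Kᵢ` with `g(aᵢ,bᵢ) = 0` and γ-invariant `Kᵢ`:
`(ε/4) Σₖ ηₖ tr({γ(eₖ), 𝔽}∘{γ(eₖ), 𝔽}) = (n − 2) tr(𝔽∘𝔽)`. -/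
theorem stmt_16 (V : Type*) [AddCommGroup V] [Module ℝ V]
    (E : Type*) [AddCommGroup E] [Module ℂ E] [FiniteDimensional ℂ E]
    (g : V → V → ℝ) (hg : ∀ v w : V, g v w = g w v)
    (hgadd : ∀ u v w : V, g (u + v) w = g u w + g v w)
    (hgsmul : ∀ (c : ℝ) (v w : V), g (c • v) w = c * g v w)
    (ε : ℝ) (hε : ε = 1 ∨ ε = -1)
    (γ : V → Module.End ℂ E)
    (hγadd : ∀ v w : V, γ (v + w) = γ v + γ w)
    (hγsmul : ∀ (c : ℝ) (v : V), γ (c • v) = (c : ℂ) • γ v)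
    (hcl : ∀ v w : V, γ v * γ w + γ w * γ v = ((2 * ε * g v w : ℝ) : ℂ) • 1)
    (n : ℕ) (e : Module.Basis (Fin n) ℝ V)
    (η : Fin n → ℝ) (hη : ∀ k, η k = 1 ∨ η k = -1)
    (horth : ∀ i j : Fin n, i ≠ j → g (e i) (e j) = 0)
    (hdiag : ∀ i : Fin n, g (e i) (e i) = η i)
    (m : ℕ) (a b : Fin m → V) (K : Fin m → Module.End ℂ E)
    (hab : ∀ i : Fin m, g (a i) (b i) = 0)
    (hK : ∀ (i : Fin m) (v : V), K i * γ v = γ v * K i)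
    (𝔽 : Module.End ℂ E)
    (h𝔽 : 𝔽 = ∑ i : Fin m, γ (a i) * γ (b i) * K i) :
    ((ε : ℂ) / 4) * ∑ k : Fin n, ((η k : ℝ) : ℂ) *
        LinearMap.trace ℂ E ((γ (e k) * 𝔽 + 𝔽 * γ (e k)) * (γ (e k) * 𝔽 + 𝔽 * γ (e k)))
      = ((n : ℂ) - 2) * LinearMap.trace ℂ E (𝔽 * 𝔽) := by
  have hη2 : ∀ k, η k ^ 2 = 1 := fun k => by rcases hη k with h | h <;> simp [h]
  have hε2 : (ε : ℂ) ^ 2 = 1 := by rcases hε with h | h <;> simp [h]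
  let B : LinearMap.BilinForm ℝ V := LinearMap.mk₂ ℝ g hgadd hgsmul
    (fun u v w => by rw [hg, hgadd, hg v, hg w]) (fun c u v => by rw [hg, hgsmul, hg, smul_eq_mul])
  let γₗ : V →ₗ[ℝ] Module.End ℂ E :=
    ⟨⟨γ, hγadd⟩, fun c v => (hγsmul c v).trans (Complex.coe_smul _ _)⟩
  have hclₗ : ∀ v w, γₗ v * γₗ w + γₗ w * γₗ v = (2 * ε * B v w) • (1 : Module.End ℂ E) :=
    fun v w => (hcl v w).trans (Complex.coe_smul _ _)
  have hexp := LinearMap.BilinForm.sum_mul_apply_basis_smul (B := B) horth hdiag hη2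
  have hC𝔽 : cliffordContraction γₗ e η 𝔽 = (ε * (n - 4)) • 𝔽 := by
    have h := cliffordContraction_sum_gamma_mul_gamma_mul hclₗ hdiag hη2 hexp a b K hab hK
    rw [Fintype.card_fin] at h
    rwa [h𝔽]
  have hC1 : cliffordContraction γₗ e η 1 = (ε * n) • 1 := by
    simpa only [Fintype.card_fin] using cliffordContraction_one hclₗ hdiag hη2
  have hcoe : ∀ X, ∑ k, ((η k : ℝ) : ℂ) • (γ (e k) * X * γ (e k)) =
      cliffordContraction γₗ e η X :=
    fun X => by simp only [Complex.coe_smul, cliffordContraction_apply]; rfl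
  have hcoe1 := hcoe 1
  simp only [mul_one] at hcoe1
  rw [LinearMap.sum_mul_trace_anticomm_mul_self, hcoe, hcoe1, hC𝔽, hC1]
  simp only [smul_mul_assoc, one_mul, ← Complex.coe_smul, map_smul, smul_eq_mul]
  push_cast
  linear_combination (n - 2 : ℂ) * LinearMap.trace ℂ E (𝔽 * 𝔽) * hε2
end
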